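/- arXiv:1801.00847 — 2 statements merged into one kernel-verified Lean document; each statement's English description precedes it below -/
import Mathlib

section
/- Let $A \in \mathbb{R}^{m\times d}$, $y \in \mathbb{R}^m$, $\Gamma$ symmetric positive definite, and let $u^{(1)},\dots,u^{(J)} : \mathbb{R} \to \mathbb{R}^d$ be differentiable solutions of the coupled system $\frac{du^{(j)}}{dt} = \frac{1}{J}\sum_{k=1}^J \langle A(u^{(k)}-\bar u),\, y - Au^{(j)}\rangle_{\Gamma}\,(u^{(k)} - \bar u)$, where $\bar u(t) = \frac{1}{J}\sum_k u^{(k)}(t)$ and $\langle a,b\rangle_\Gamma = \langle \Gamma^{-1}a, b\rangle$. Then this system is equivalent to $\frac{du^{(j)}}{dt} = -C(u)\nabla\Phi(u^{(j)})$ with $C(u) = \frac{1}{J}\sum_k (u^{(k)}-\bar u)(u^{(k)}-\bar u)^T$ and $\Phi(u) = \frac{1}{2}\|\Gamma^{-1/2}(y-Au)\|^2$. -/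
/-!
The two vector fields agree pointwise. Writing `e_k = u_k - ū` and `r = y - A u_j`, symmetry of
`Γ⁻¹` moves `A` across the weighted inner product, `⟨A e_k, r⟩_Γ = e_k ⬝ᵥ Aᵀ Γ⁻¹ r`, and the
empirical covariance acts by `C w = (1/J) ∑ₖ (e_k ⬝ᵥ w) e_k`.
-/

open Matrix

namespace Matrix

variable {R m n ι : Type*} [CommSemiring R] [Fintype m] [Fintype n] [Fintype ι]

theorem mulVec_mulVec_dotProduct_of_isSymm {M : Matrix m m R} (hM : M.IsSymm)
    (A : Matrix m n R) (v : n → R) (r : m → R) :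
    (M *ᵥ (A *ᵥ v)) ⬝ᵥ r = v ⬝ᵥ (Aᵀ *ᵥ (M *ᵥ r)) := by
  rw [mulVec_transpose, dotProduct_comm v, ← dotProduct_mulVec, dotProduct_comm (M *ᵥ r),
    dotProduct_mulVec, ← mulVec_transpose, hM.eq]

theorem sum_vecMulVec_self_mulVec (e : ι → n → R) (w : n → R) :
    (∑ k, vecMulVec (e k) (e k)) *ᵥ w = ∑ k, (e k ⬝ᵥ w) • e k := by
  simp only [sum_mulVec, vecMulVec_mulVec, op_smul_eq_smul]

end Matrix

theorem eki_inner_product_form_iff_gradient_flow_general (m d J : ℕ)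
    (A : Matrix (Fin m) (Fin d) ℝ) (y : Fin m → ℝ)
    (Γ : Matrix (Fin m) (Fin m) ℝ) (hΓ : Γ.PosDef)
    (u : Fin J → ℝ → (Fin d → ℝ))
    (ubar : ℝ → (Fin d → ℝ))
    (C : ℝ → Matrix (Fin d) (Fin d) ℝ)
    (hC : ∀ t, C t = (1 / (J : ℝ)) • ∑ k, vecMulVec (u k t - ubar t) (u k t - ubar t)) :
    (∀ j t, HasDerivAt (u j)
        ((1 / (J : ℝ)) • ∑ k,
          ((Γ⁻¹ *ᵥ (A *ᵥ (u k t - ubar t))) ⬝ᵥ (y - A *ᵥ u j t)) • (u k t - ubar t)) t)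
      ↔
    (∀ j t, HasDerivAt (u j)
        (-(C t *ᵥ (-(Aᵀ *ᵥ (Γ⁻¹ *ᵥ (y - A *ᵥ u j t)))))) t) := by
  have hΓinv : Γ⁻¹.IsSymm := (isHermitian_iff_isSymm.mp hΓ.isHermitian).inv
  have drift_eq : ∀ j t,
      (1 / (J : ℝ)) • ∑ k,
          ((Γ⁻¹ *ᵥ (A *ᵥ (u k t - ubar t))) ⬝ᵥ (y - A *ᵥ u j t)) • (u k t - ubar t)
        = -(C t *ᵥ (-(Aᵀ *ᵥ (Γ⁻¹ *ᵥ (y - A *ᵥ u j t))))) := fun j t => by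
    rw [mulVec_neg, neg_neg, hC, smul_mulVec, sum_vecMulVec_self_mulVec]
    simp only [mulVec_mulVec_dotProduct_of_isSymm hΓinv]
  simp only [drift_eq]

/-- Noise-free linear continuous-time limit of EKI: the inner-product form of the
particle dynamics is equivalent to the preconditioned gradient flow
`du^{(j)}/dt = -C(u)∇Φ(u^{(j)})` with `C(u)` the empirical covariance and
`∇Φ(u) = -Aᵀ Γ⁻¹ (y - Au)`. -/
theorem eki_inner_product_form_iff_gradient_flow (m d J : ℕ)
    (A : Matrix (Fin m) (Fin d) ℝ) (y : Fin m → ℝ)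
    (Γ : Matrix (Fin m) (Fin m) ℝ) (hΓ : Γ.PosDef)
    (u : Fin J → ℝ → (Fin d → ℝ))
    (ubar : ℝ → (Fin d → ℝ)) (hubar : ∀ t, ubar t = (1 / (J : ℝ)) • ∑ k, u k t)
    (C : ℝ → Matrix (Fin d) (Fin d) ℝ)
    (hC : ∀ t, C t = (1 / (J : ℝ)) • ∑ k, vecMulVec (u k t - ubar t) (u k t - ubar t)) :
    (∀ j t, HasDerivAt (u j)
        ((1 / (J : ℝ)) • ∑ k,
          ((Γ⁻¹ *ᵥ (A *ᵥ (u k t - ubar t))) ⬝ᵥ (y - A *ᵥ u j t)) • (u k t - ubar t)) t)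
      ↔
    (∀ j t, HasDerivAt (u j)
        (-(C t *ᵥ (-(Aᵀ *ᵥ (Γ⁻¹ *ᵥ (y - A *ᵥ u j t)))))) t) :=
  eki_inner_product_form_iff_gradient_flow_general m d J A y Γ hΓ u ubar C hC
end

section
/- Let $u^{(1)},\dots,u^{(J)} : \mathbb{R} \to \mathbb{R}^d$ be differentiable and satisfy a system of the form $\frac{du^{(j)}}{dt}(t) = \sum_{k=1}^J a_{jk}(t)\,(u^{(k)}(t) - \bar u(t))$ for continuous scalar functions $a_{jk}$, where $\bar u = \frac1J\sum_k u^{(k)}$. If at time $t = 0$ all $u^{(j)}(0)$ lie in a subspace $\mathcal{A} \subseteq \mathbb{R}^d$, then $u^{(j)}(t) \in \mathcal{A}$ for all $t \ge 0$ and all $j$. -/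
/-!
Pair the ensemble with a linear functional `φ` vanishing on `𝒜`. The scalars `φ (u k t)` obey
the same centered linear ODE as the ensemble itself, now with zero initial data; linear ODEs with
continuous coefficients have unique solutions, so these scalars vanish for all `t ≥ 0`. Since the
functionals vanishing on `𝒜` cut out `𝒜`, every `u j t` lies in `𝒜`.
-/

open Set

theorem linear_ODE_solution_eq_zero {E : Type*} [NormedAddCommGroup E] [NormedSpace ℝ E]
    {A : ℝ → E →L[ℝ] E} {x : ℝ → E} (hA : Continuous A)
    (hx : ∀ t, HasDerivAt x (A t (x t)) t) (h0 : x 0 = 0) (t : ℝ) (ht : 0 ≤ t) : x t = 0 := by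
  obtain ⟨C, hC⟩ :=
    (isCompact_Icc (a := (0 : ℝ)) (b := t)).exists_bound_of_continuousOn hA.continuousOn
  have hlip : ∀ s ∈ Ico 0 t, LipschitzOnWith C.toNNReal (A s) univ := fun s hs =>
    ((A s).lipschitz.weaken (by simpa [← NNReal.coe_le_coe] using
      (hC s (Ico_subset_Icc_self hs)).trans (le_max_left C 0))).lipschitzOnWith
  exact ODE_solution_unique_of_mem_Icc_right hlip
    (HasDerivAt.continuousOn fun s _ => hx s) (fun s _ => (hx s).hasDerivWithinAt)
    (fun _ _ => mem_univ _) continuousOn_const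
    (fun s _ => by simpa using hasDerivWithinAt_const s (Ici s) (0 : E))
    (fun _ _ => mem_univ _) h0 (right_mem_Icc.mpr ht)

section CenteredField

variable {J : ℕ} {F G : Type*} [NormedAddCommGroup F] [NormedSpace ℝ F]
  [NormedAddCommGroup G] [NormedSpace ℝ G]

variable (F) in
noncomputable def ensembleDeviation (k : Fin J) : (Fin J → F) →L[ℝ] F :=
  ContinuousLinearMap.proj k - (1 / (J : ℝ)) • ∑ m, ContinuousLinearMap.proj m

variable (F) in
-- A sum of fixed operators with scalar weights `a j k`, so that continuity in `a` is immediate.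
noncomputable def centeredField (a : Fin J → Fin J → ℝ) : (Fin J → F) →L[ℝ] (Fin J → F) :=
  ∑ j, ∑ k, a j k • (ContinuousLinearMap.single ℝ (fun _ => F) j).comp (ensembleDeviation F k)

theorem centeredField_apply (a : Fin J → Fin J → ℝ) (X : Fin J → F) (j : Fin J) :
    centeredField F a X j = ∑ k, a j k • (X k - (1 / (J : ℝ)) • ∑ m, X m) := by
  simp only [centeredField, FunLike.coe_sum, FunLike.coe_smul,
    ContinuousLinearMap.coe_comp, Finset.sum_apply, Pi.smul_apply, Function.comp_apply,
    ContinuousLinearMap.single_apply]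
  rw [Finset.sum_eq_single j (fun i _ hij => by simp [Ne.symm hij]) (by simp)]
  simp [ensembleDeviation]

theorem continuous_centeredField {a : ℝ → Fin J → Fin J → ℝ}
    (ha : ∀ j k, Continuous fun t => a t j k) : Continuous fun t => centeredField F (a t) :=
  continuous_finsetSum _ fun j _ => continuous_finsetSum _ fun k _ =>
    (ha j k).smul continuous_const

theorem map_centeredField (L : F →ₗ[ℝ] G) (a : Fin J → Fin J → ℝ) (X : Fin J → F) :
    (fun j => L (centeredField F a X j)) = centeredField G a fun k => L (X k) := by
  ext j
  simp [centeredField_apply]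

end CenteredField

/-- Continuous-time subspace property: if each particle's velocity is a time-dependent
linear combination of the centered ensemble members and all particles start in a
subspace `𝒜`, then they remain in `𝒜` for all `t ≥ 0`. -/
theorem continuous_time_subspace_invariance (d J : ℕ)
    (𝒜 : Submodule ℝ (Fin d → ℝ))
    (u : Fin J → ℝ → (Fin d → ℝ))
    (ubar : ℝ → (Fin d → ℝ)) (hubar : ∀ t, ubar t = (1 / (J : ℝ)) • ∑ k, u k t)
    (a : Fin J → Fin J → ℝ → ℝ) (ha : ∀ j k, Continuous (a j k))
    (hode : ∀ j t, HasDerivAt (u j) (∑ k, a j k t • (u k t - ubar t)) t)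
    (h0 : ∀ j, u j 0 ∈ 𝒜) :
    ∀ j t, 0 ≤ t → u j t ∈ 𝒜 := by
  intro j t ht
  rw [← Subspace.forall_mem_dualAnnihilator_apply_eq_zero_iff]
  intro φ hφ
  have hU : ∀ s, HasDerivAt (fun s k => u k s)
      (centeredField (Fin d → ℝ) (fun i k => a i k s) fun k => u k s) s := fun s =>
    hasDerivAt_pi.mpr fun i => by simpa only [centeredField_apply, hubar] using hode i s
  let Φ : (Fin J → Fin d → ℝ) →L[ℝ] (Fin J → ℝ) :=
    .pi fun k => LinearMap.toContinuousLinearMap φ ∘L .proj k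
  have hy : ∀ s, HasDerivAt (fun s k => φ (u k s))
      (centeredField ℝ (fun i k => a i k s) fun k => φ (u k s)) s := fun s => by
    simpa [Φ, Function.comp_def, map_centeredField φ] using Φ.hasFDerivAt.comp_hasDerivAt s (hU s)
  have hy0 : (fun k => φ (u k 0)) = 0 :=
    funext fun k => (Submodule.mem_dualAnnihilator φ).mp hφ _ (h0 k)
  exact congrFun (linear_ODE_solution_eq_zero (continuous_centeredField ha) hy hy0 t ht) j
end
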